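/- Let p ≥ 1 and q be integers with p² + 4q > 0 and p² + 2q − 2 < p·√(p² + 4q), set α = (p + √(p² + 4q))/2, β = (p − √(p² + 4q))/2, let a, b be integers with c₁ = (b − aβ)/(α − β) > 0, and define Wₙ = c₁αⁿ − c₂βⁿ where c₂ = (b − aα)/(α − β). Let m, t ≥ 1 be integers. Then lim_{n→∞} [ (Σ_{k=n}^{∞} 1/(Σ_{i=0}^{t} W_{mk+i}))^{−1} − (1/(α − 1))·(W_{mn+t+1} − W_{mn} − W_{m(n−1)+t+1} + W_{m(n−1)}) ] = 0. -/

import Mathlib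

/-!
Summing `t + 1` consecutive terms turns the Binet form into `A xᵏ - B yᵏ` with `x = αᵐ ≥ 1`,
`|y| = |β|ᵐ < 1` and `A > 0`. Its reciprocal differs from `1 / (A xᵏ)` by `O((|y| / x²)ᵏ)`, so the
tail sum is the geometric tail `(A (1 - x⁻¹) xⁿ)⁻¹` up to `O((|y| / x²)ⁿ)`; inverting multiplies the
error by `x²ⁿ`, leaving `O(|y|ⁿ) → 0`. The second difference of `W` divided by `α - 1` is
`A (1 - x⁻¹) xⁿ` plus a multiple of `yⁿ`.
-/

open Filter Finset Topology

theorem one_le_add_sqrt_div_two {p q : ℤ} (hp : 1 ≤ p) (hdisc : 0 < (p : ℝ) ^ 2 + 4 * q) :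
    1 ≤ ((p : ℝ) + Real.sqrt ((p : ℝ) ^ 2 + 4 * q)) / 2 := by
  have hdisc' : (1 : ℝ) ≤ (p : ℝ) ^ 2 + 4 * q := by
    have : 0 < p ^ 2 + 4 * q := by exact_mod_cast hdisc
    exact_mod_cast this
  have hp' : (1 : ℝ) ≤ p := by exact_mod_cast hp
  linarith [Real.one_le_sqrt.mpr hdisc']

theorem abs_sub_sqrt_div_two_lt_one {p q : ℝ} (hdisc : 0 ≤ p ^ 2 + 4 * q)
    (hcond : p ^ 2 + 2 * q - 2 < p * Real.sqrt (p ^ 2 + 4 * q)) :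
    |(p - Real.sqrt (p ^ 2 + 4 * q)) / 2| < 1 := by
  rw [← sq_lt_one_iff_abs_lt_one]
  nlinarith [Real.sq_sqrt hdisc]

theorem abs_one_div_sub_sub_one_div_le {u v : ℝ} (hu : 0 < u) (hv : 2 * |v| ≤ u) :
    |1 / (u - v) - 1 / u| ≤ 2 * |v| / u ^ 2 := by
  have huv : 0 < u - v := by linarith [le_abs_self v]
  rw [div_sub_div _ _ huv.ne' hu.ne', abs_div, abs_of_pos (by positivity : 0 < (u - v) * u),
    div_le_div_iff₀ (by positivity) (by positivity)]
  have hnum : |1 * u - (u - v) * 1| = |v| := by ring_nf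
  rw [hnum]
  have hv' : 0 ≤ u - 2 * v := by linarith [le_abs_self v]
  nlinarith [mul_nonneg (mul_nonneg (abs_nonneg v) hu.le) hv']

theorem summable_tail_and_abs_tsum_tail_le_of_abs_le_geometric {f : ℕ → ℝ} {C r : ℝ} {N n : ℕ}
    (hr₀ : 0 ≤ r) (hr₁ : r < 1) (hf : ∀ j ≥ N, |f j| ≤ C * r ^ j) (hn : N ≤ n) :
    Summable (fun k => f (n + k)) ∧ |∑' k, f (n + k)| ≤ C * r ^ n / (1 - r) := by
  have hbound : ∀ k, ‖f (n + k)‖ ≤ C * r ^ n * r ^ k := fun k => by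
    simpa [pow_add, mul_assoc] using hf (n + k) (by omega)
  have hgeo := (hasSum_geometric_of_lt_one hr₀ hr₁).mul_left (C * r ^ n)
  exact ⟨.of_norm_bounded hgeo.summable hbound,
    by simpa [div_eq_mul_inv] using tsum_of_norm_bounded hgeo hbound⟩

theorem hasSum_one_div_mul_pow_add {A x : ℝ} (hA : A ≠ 0) (hx : 1 < x) (n : ℕ) :
    HasSum (fun k : ℕ => 1 / (A * x ^ (n + k))) (A * (1 - x⁻¹) * x ^ n)⁻¹ := by
  have hgeo := (hasSum_geometric_of_lt_one (by positivity) (inv_lt_one_of_one_lt₀ hx)).mul_left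
    (A * x ^ n)⁻¹
  have hterm : (fun k : ℕ => 1 / (A * x ^ (n + k))) = fun k => (A * x ^ n)⁻¹ * x⁻¹ ^ k := by
    ext k
    rw [pow_add, inv_pow]
    field_simp
  rwa [hterm, mul_right_comm, mul_inv (A * x ^ n)]

theorem tendsto_inv_sub_inv_of_tendsto_div_sq {ι : Type*} {l : Filter ι} {T G : ι → ℝ}
    (hG : Tendsto G l (𝓝 0)) (hG₀ : ∀ᶠ i in l, G i ≠ 0)
    (h : Tendsto (fun i => (T i - G i) / G i ^ 2) l (𝓝 0)) :
    Tendsto (fun i => (T i)⁻¹ - (G i)⁻¹) l (𝓝 0) := by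
  set e := fun i => (T i - G i) / G i ^ 2
  have hden : Tendsto (fun i => 1 + e i * G i) l (𝓝 1) := by
    simpa using (h.mul hG).const_add 1
  have hlim : Tendsto (fun i => -e i / (1 + e i * G i)) l (𝓝 0) := by
    have := h.neg.div hden one_ne_zero
    rwa [neg_zero, zero_div] at this
  refine hlim.congr' ?_
  filter_upwards [hG₀, hden.eventually_ne one_ne_zero] with i hGi hdi
  have hT : T i = G i * (1 + e i * G i) := by simp only [e]; field_simp; ring
  rw [hT]
  field_simp
  ring

theorem tendsto_inv_tsum_one_div_sub_of_one_lt {A B x y : ℝ} (hA : 0 < A) (hx : 1 < x)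
    (hy : |y| < 1) :
    Tendsto (fun n : ℕ => (∑' k : ℕ, 1 / (A * x ^ (n + k) - B * y ^ (n + k)))⁻¹
      - A * (1 - x⁻¹) * x ^ n) atTop (𝓝 0) := by
  set D := A * (1 - x⁻¹)
  have hD : 0 < D := mul_pos hA (sub_pos.mpr (inv_lt_one_of_one_lt₀ hx))
  set ρ := |y| / x ^ 2
  have hρ₀ : 0 ≤ ρ := by positivity
  have hρ₁ : ρ < 1 := (div_lt_one (by positivity)).mpr (hy.trans (one_lt_pow₀ hx two_ne_zero))
  set r : ℕ → ℝ := fun j => 1 / (A * x ^ j - B * y ^ j) - 1 / (A * x ^ j)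
  obtain ⟨N, hN⟩ := eventually_atTop.mp <|
    ((tendsto_pow_atTop_atTop_of_one_lt hx).const_mul_atTop hA).eventually_ge_atTop (2 * |B|)
  have hr : ∀ j ≥ N, |r j| ≤ 2 * |B| / A ^ 2 * ρ ^ j := fun j hj => by
    have hBy : 2 * |B * y ^ j| ≤ A * x ^ j := by
      rw [abs_mul, abs_pow]
      nlinarith [pow_le_one₀ (abs_nonneg y) hy.le (n := j), hN j hj, abs_nonneg B]
    calc |r j| ≤ 2 * |B * y ^ j| / (A * x ^ j) ^ 2 :=
          abs_one_div_sub_sub_one_div_le (by positivity) hBy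
      _ = 2 * |B| / A ^ 2 * ρ ^ j := by
          rw [abs_mul, abs_pow, div_pow, ← pow_mul, mul_comm 2 j, pow_mul]
          field_simp
  set G : ℕ → ℝ := fun n => (D * x ^ n)⁻¹
  have hTG : ∀ n ≥ N, ∑' k, 1 / (A * x ^ (n + k) - B * y ^ (n + k)) - G n = ∑' k, r (n + k) :=
    fun n hn => by
      have hsum := ((hasSum_one_div_mul_pow_add hA.ne' hx n).add
        (summable_tail_and_abs_tsum_tail_le_of_abs_le_geometric hρ₀ hρ₁ hr hn).1.hasSum).tsum_eq
      simp only [r, add_sub_cancel] at hsum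
      rw [hsum]
      ring
  have hG : Tendsto G atTop (𝓝 0) :=
    tendsto_inv_atTop_zero.comp ((tendsto_pow_atTop_atTop_of_one_lt hx).const_mul_atTop hD)
  have herr : Tendsto (fun n => (∑' k, 1 / (A * x ^ (n + k) - B * y ^ (n + k)) - G n) / G n ^ 2)
      atTop (𝓝 0) := by
    have hgeo : Tendsto (fun n : ℕ => 2 * |B| / A ^ 2 / (1 - ρ) * D ^ 2 * |y| ^ n) atTop (𝓝 0) := by
      simpa using (tendsto_pow_atTop_nhds_zero_of_abs_lt_one (by rwa [abs_abs])).const_mul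
        (2 * |B| / A ^ 2 / (1 - ρ) * D ^ 2)
    refine squeeze_zero_norm' ?_ hgeo
    filter_upwards [eventually_ge_atTop N] with n hn
    have hGsq : |G n ^ 2| = ((D * x ^ n) ^ 2)⁻¹ := by
      rw [abs_of_nonneg (by positivity), inv_pow]
    rw [hTG n hn, Real.norm_eq_abs, abs_div, hGsq, div_inv_eq_mul]
    calc _ ≤ 2 * |B| / A ^ 2 * ρ ^ n / (1 - ρ) * (D * x ^ n) ^ 2 := by
          gcongr
          exact (summable_tail_and_abs_tsum_tail_le_of_abs_le_geometric hρ₀ hρ₁ hr hn).2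
      _ = _ := by
          simp only [ρ, div_pow, ← pow_mul]
          field_simp
          ring
  have := tendsto_inv_sub_inv_of_tendsto_div_sq hG (.of_forall fun n => by positivity) herr
  simpa [G] using this

theorem tendsto_inv_tsum_one_div_sub {A B x y : ℝ} (hA : 0 < A) (hx : 1 ≤ x) (hy : |y| < 1) :
    Tendsto (fun n : ℕ => (∑' k : ℕ, 1 / (A * x ^ (n + k) - B * y ^ (n + k)))⁻¹
      - A * (1 - x⁻¹) * x ^ n) atTop (𝓝 0) := by
  rcases hx.eq_or_lt with rfl | hx
  -- For `x = 1` the terms tend to `1 / A`, so the `tsum` is `0` and both sides vanish.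
  · refine tendsto_const_nhds.congr fun n => ?_
    have hdiv : ¬ Summable fun k : ℕ => 1 / (A * 1 ^ (n + k) - B * y ^ (n + k)) := fun hs => by
      have hy' := (tendsto_pow_atTop_nhds_zero_of_abs_lt_one hy).comp (tendsto_add_atTop_nat n)
      have hlim : Tendsto (fun k : ℕ => 1 / (A * 1 ^ (n + k) - B * y ^ (n + k))) atTop
          (𝓝 (1 / A)) := by
        simpa [add_comm n] using ((hy'.const_mul B).const_sub A).inv₀ (by simpa using hA.ne')
      exact one_div_ne_zero hA.ne' (tendsto_nhds_unique hlim hs.tendsto_atTop_zero)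
    simp only [tsum_eq_zero_of_not_summable hdiv]
    simp
  · exact tendsto_inv_tsum_one_div_sub_of_one_lt hA hx hy

theorem sum_range_binet_mul_add (c₁ c₂ α β : ℝ) (m s j : ℕ) :
    ∑ i ∈ range s, (c₁ * α ^ (m * j + i) - c₂ * β ^ (m * j + i)) =
      (c₁ * ∑ i ∈ range s, α ^ i) * (α ^ m) ^ j - (c₂ * ∑ i ∈ range s, β ^ i) * (β ^ m) ^ j := by
  simp only [sum_sub_distrib, mul_sum, sum_mul, pow_add, pow_mul]
  congr 1 <;> exact sum_congr rfl fun i _ => by ring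

theorem div_sub_one_mul_binet_second_difference {c₁ c₂ α β : ℝ} (hα : α ≠ 0) (m s n : ℕ) :
    1 / (α - 1) * ((c₁ * α ^ (m * (n + 1) + s) - c₂ * β ^ (m * (n + 1) + s))
      - (c₁ * α ^ (m * (n + 1)) - c₂ * β ^ (m * (n + 1)))
      - (c₁ * α ^ (m * n + s) - c₂ * β ^ (m * n + s)) + (c₁ * α ^ (m * n) - c₂ * β ^ (m * n))) =
    c₁ * (∑ i ∈ range s, α ^ i) * (1 - (α ^ m)⁻¹) * (α ^ m) ^ (n + 1)
      - c₂ * ((β ^ s - 1) / (α - 1)) * (β ^ m - 1) * (β ^ m) ^ n := by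
  have hgeom : (α ^ s - 1) / (α - 1) * (α ^ m - 1) = (∑ i ∈ range s, α ^ i) * (α ^ m - 1) := by
    rcases eq_or_ne α 1 with rfl | h
    -- both sides vanish, the left one because `x / 0 = 0`
    · simp
    · rw [geom_sum_eq h]
  calc _ = c₁ * ((α ^ s - 1) / (α - 1) * (α ^ m - 1)) * (α ^ m) ^ n
        - c₂ * ((β ^ s - 1) / (α - 1)) * (β ^ m - 1) * (β ^ m) ^ n := by
        simp only [pow_add, pow_mul]
        ring
    _ = _ := by
        rw [hgeom]
        field_simp
        ring

theorem inverse_tail_sum_consecutive_general (p q : ℤ) (α β c₁ c₂ : ℝ)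
    (hp : 1 ≤ p)
    (hdisc : 0 < (p : ℝ) ^ 2 + 4 * q)
    (hcond : (p : ℝ) ^ 2 + 2 * q - 2 < p * Real.sqrt ((p : ℝ) ^ 2 + 4 * q))
    (hα : α = ((p : ℝ) + Real.sqrt ((p : ℝ) ^ 2 + 4 * q)) / 2)
    (hβ : β = ((p : ℝ) - Real.sqrt ((p : ℝ) ^ 2 + 4 * q)) / 2)
    (hc₁pos : 0 < c₁)
    (W : ℤ → ℝ) (hW : ∀ n : ℤ, W n = c₁ * α ^ n - c₂ * β ^ n)
    (m t : ℕ) (hm : 1 ≤ m) :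
    Tendsto (fun n : ℕ =>
      (∑' k : ℕ,
        1 / (∑ i ∈ Finset.range (t + 1), W ((m : ℤ) * (n + k) + i)))⁻¹ -
      (1 / (α - 1)) *
        (W ((m : ℤ) * n + t + 1) - W ((m : ℤ) * n) -
          W ((m : ℤ) * ((n : ℤ) - 1) + t + 1) + W ((m : ℤ) * ((n : ℤ) - 1))))
      atTop (nhds 0) := by
  have hα₁ : 1 ≤ α := hα ▸ one_le_add_sqrt_div_two hp hdisc
  have hβ₁ : |β| < 1 := hβ ▸ abs_sub_sqrt_div_two_lt_one hdisc.le hcond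
  have hWnat : ∀ (z : ℤ) (j : ℕ), z = j → W z = c₁ * α ^ j - c₂ * β ^ j := by
    rintro z j rfl
    simpa using hW j
  set A := c₁ * ∑ i ∈ range (t + 1), α ^ i with hA_def
  set B := c₂ * ∑ i ∈ range (t + 1), β ^ i
  have hA : 0 < A := mul_pos hc₁pos (sum_pos (fun i _ => by positivity) nonempty_range_add_one)
  have hy : |β ^ m| < 1 := by
    rw [abs_pow]
    exact pow_lt_one₀ (abs_nonneg β) hβ₁ (by omega)
  have hblock : ∀ j : ℕ,
      ∑ i ∈ range (t + 1), W ((m : ℤ) * j + i) = A * (α ^ m) ^ j - B * (β ^ m) ^ j := fun j => by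
    rw [← sum_range_binet_mul_add]
    exact sum_congr rfl fun i _ => hWnat _ _ (by push_cast; ring)
  have hmain := (tendsto_inv_tsum_one_div_sub (B := B) hA (one_le_pow₀ (n := m) hα₁) hy).comp
    (tendsto_add_atTop_nat 1)
  have hcorr := (tendsto_pow_atTop_nhds_zero_of_abs_lt_one hy).const_mul
    (c₂ * ((β ^ (t + 1) - 1) / (α - 1)) * (β ^ m - 1))
  rw [mul_zero] at hcorr
  have hlim := hmain.add hcorr
  rw [add_zero] at hlim
  refine (tendsto_add_atTop_iff_nat 1).mp (hlim.congr fun n => ?_)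
  simp only [Function.comp_apply, ← Nat.cast_add, hblock]
  rw [hWnat _ (m * (n + 1) + (t + 1)) (by push_cast; ring),
    hWnat _ (m * (n + 1)) (by push_cast; ring), hWnat _ (m * n + (t + 1)) (by push_cast; ring),
    hWnat _ (m * n) (by push_cast; ring),
    div_sub_one_mul_binet_second_difference (by positivity), ← hA_def]
  ring

/-- Corollary 3.3: the inverse of the tail sum `Σ_{k=n}^∞ 1/(Σ_{i=0}^t W_{mk+i})` is
asymptotically `(1/(α−1))·(W_{mn+t+1} − W_{mn} − W_{m(n−1)+t+1} + W_{m(n−1)})`. -/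
theorem inverse_tail_sum_consecutive (p q a b : ℤ) (α β c₁ c₂ : ℝ)
    (hp : 1 ≤ p)
    (hdisc : 0 < (p : ℝ) ^ 2 + 4 * q)
    (hcond : (p : ℝ) ^ 2 + 2 * q - 2 < p * Real.sqrt ((p : ℝ) ^ 2 + 4 * q))
    (hα : α = ((p : ℝ) + Real.sqrt ((p : ℝ) ^ 2 + 4 * q)) / 2)
    (hβ : β = ((p : ℝ) - Real.sqrt ((p : ℝ) ^ 2 + 4 * q)) / 2)
    (hc₁ : c₁ = ((b : ℝ) - a * β) / (α - β))
    (hc₂ : c₂ = ((b : ℝ) - a * α) / (α - β))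
    (hc₁pos : 0 < c₁)
    (W : ℤ → ℝ) (hW : ∀ n : ℤ, W n = c₁ * α ^ n - c₂ * β ^ n)
    (m t : ℕ) (hm : 1 ≤ m) (ht : 1 ≤ t) :
    Tendsto (fun n : ℕ =>
      (∑' k : ℕ,
        1 / (∑ i ∈ Finset.range (t + 1), W ((m : ℤ) * (n + k) + i)))⁻¹ -
      (1 / (α - 1)) *
        (W ((m : ℤ) * n + t + 1) - W ((m : ℤ) * n) -
          W ((m : ℤ) * ((n : ℤ) - 1) + t + 1) + W ((m : ℤ) * ((n : ℤ) - 1))))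
      atTop (nhds 0) :=
  inverse_tail_sum_consecutive_general p q α β c₁ c₂ hp hdisc hcond hα hβ hc₁pos W hW m t hm
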